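/- arXiv:2003.13613 — 4 statements merged into one kernel-verified Lean document; each statement's English description precedes it below -/
import Mathlib

section
/- Let n ≥ 2 be an integer, b > 0, and let ρ : [0,b] → ℝ be a C² function with ρ(0) = ρ(b) = 0, ρ'(0) = 1, ρ'(b) = -1, and ρ > 0 on (0,b). Suppose that the scalar curvature expression Scal(t) = -2(n-1)·ρ''(t)/ρ(t) + (n-1)(n-2)·(1 - ρ'(t)²)/ρ(t)² is non-negative for all t ∈ (0,b). Then |ρ'(t)| ≤ 1 for all t ∈ [0,b]. -/
/-!
Clearing denominators, `Scal ≥ 0` reads `2 ρ'' ρ ≤ (n - 2)(1 - ρ'²)`. For `n = 2` this gives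
`ρ'' ≤ 0`, so `ρ'` decreases from `ρ'(0) = 1` to `ρ'(b) = -1`. For `n ≥ 3`, wherever `|ρ'| > 1`
the right-hand side is negative, so `ρ'' ≠ 0`; but if `|ρ'|` exceeded `1` somewhere, it would
attain its maximum at an interior point, where `ρ'' = 0` by Fermat's theorem.
-/

open Set

theorem two_mul_mul_le_of_scal_nonneg {n r p a : ℝ} (hn : 1 < n) (hr : 0 < r)
    (h : 0 ≤ -2 * (n - 1) * a / r + (n - 1) * (n - 2) * (1 - p ^ 2) / r ^ 2) :
    2 * a * r ≤ (n - 2) * (1 - p ^ 2) := by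
  have hclear : -2 * (n - 1) * a / r + (n - 1) * (n - 2) * (1 - p ^ 2) / r ^ 2
      = ((n - 2) * (1 - p ^ 2) - 2 * a * r) * ((n - 1) / r ^ 2) := by
    field_simp
    ring
  rw [hclear] at h
  linarith [nonneg_of_mul_nonneg_left h (by positivity)]

theorem abs_le_of_antitoneOn {f : ℝ → ℝ} {a b c : ℝ} (hf : AntitoneOn f (Icc a b))
    (ha : f a ≤ c) (hb : -c ≤ f b) : ∀ t ∈ Icc a b, |f t| ≤ c := fun _ ht =>
  abs_le.2 ⟨hb.trans (hf ht (right_mem_Icc.2 (ht.1.trans ht.2)) ht.2),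
    (hf (left_mem_Icc.2 (ht.1.trans ht.2)) ht ht.1).trans ha⟩

theorem abs_le_of_hasDerivAt_ne_zero {f f' : ℝ → ℝ} {a b c : ℝ}
    (hf : ContinuousOn f (Icc a b)) (hf' : ∀ t ∈ Ioo a b, HasDerivAt f (f' t) t)
    (ha : |f a| ≤ c) (hb : |f b| ≤ c) (hcrit : ∀ t ∈ Ioo a b, c < |f t| → f' t ≠ 0) :
    ∀ t ∈ Icc a b, |f t| ≤ c := by
  intro s hs
  by_contra! hs_gt
  obtain ⟨t₀, ht₀, hmax⟩ := isCompact_Icc.exists_isMaxOn ⟨s, hs⟩ hf.abs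
  have hgt : c < |f t₀| := hs_gt.trans_le (hmax hs)
  have ht₀' : t₀ ∈ Ioo a b :=
    ⟨ht₀.1.lt_of_ne (by rintro rfl; linarith), ht₀.2.lt_of_ne (by rintro rfl; linarith)⟩
  have hloc : IsLocalMax (fun t => |f t|) t₀ := hmax.isLocalMax (Icc_mem_nhds ht₀'.1 ht₀'.2)
  have hextr : IsLocalExtr f t₀ := by
    rcases le_or_gt 0 (f t₀) with hnonneg | hneg
    · refine Or.inr (hloc.mono fun t ht => ?_)
      simp only [abs_of_nonneg hnonneg] at ht
      exact (le_abs_self _).trans ht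
    · refine Or.inl (hloc.mono fun t ht => ?_)
      simp only [abs_of_neg hneg] at ht
      linarith [neg_le_abs (f t)]
  exact hcrit t₀ ht₀' hgt (hextr.hasDerivAt_eq_zero (hf' t₀ ht₀'))

theorem invariant_spectrum_rho_deriv_bound_general
    (n : ℕ) (hn : 2 ≤ n) (b : ℝ)
    (ρ ρ' ρ'' : ℝ → ℝ)
    (hρ2 : ∀ t ∈ Icc (0:ℝ) b, HasDerivWithinAt ρ' (ρ'' t) (Icc 0 b) t)
    (h0' : ρ' 0 = 1) (hb' : ρ' b = -1)
    (hpos : ∀ t ∈ Ioo (0:ℝ) b, 0 < ρ t)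
    (hscal : ∀ t ∈ Ioo (0:ℝ) b,
      0 ≤ -2 * ((n:ℝ) - 1) * ρ'' t / ρ t
          + ((n:ℝ) - 1) * ((n:ℝ) - 2) * (1 - (ρ' t) ^ 2) / (ρ t) ^ 2) :
    ∀ t ∈ Icc (0:ℝ) b, |ρ' t| ≤ 1 := by
  have hn1 : (1:ℝ) < n := by exact_mod_cast hn
  have key : ∀ t ∈ Ioo 0 b, 2 * ρ'' t * ρ t ≤ (n - 2) * (1 - ρ' t ^ 2) := fun t ht =>
    two_mul_mul_le_of_scal_nonneg hn1 (hpos t ht) (hscal t ht)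
  have hcont : ContinuousOn ρ' (Icc 0 b) := fun t ht => (hρ2 t ht).continuousWithinAt
  have hderiv : ∀ t ∈ Ioo 0 b, HasDerivAt ρ' (ρ'' t) t := fun t ht =>
    (hρ2 t (Ioo_subset_Icc_self ht)).hasDerivAt (Icc_mem_nhds ht.1 ht.2)
  rcases hn.eq_or_lt with rfl | hn3
  · refine abs_le_of_antitoneOn ?_ h0'.le (by rw [hb'])
    refine antitoneOn_of_hasDerivWithinAt_nonpos (f' := ρ'') (convex_Icc 0 b) hcont ?_ ?_ <;>
      rw [interior_Icc]
    · exact fun t ht => (hderiv t ht).hasDerivWithinAt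
    · intro t ht
      have hkey := key t ht
      norm_num at hkey
      nlinarith [hpos t ht]
  · have hn2 : (2:ℝ) < n := by exact_mod_cast hn3
    refine abs_le_of_hasDerivAt_ne_zero hcont hderiv (by rw [h0', abs_one])
      (by rw [hb', abs_neg, abs_one]) fun t ht hgt hzero => ?_
    have hsq : 1 < ρ' t ^ 2 := by simpa using one_lt_sq_iff_one_lt_abs (ρ' t) |>.2 hgt
    have hkey := key t ht
    rw [hzero] at hkey
    nlinarith

/-- If a C² profile `ρ : [0,b] → ℝ` satisfies the boundary conditions
`ρ(0) = ρ(b) = 0`, `ρ'(0) = 1`, `ρ'(b) = -1`, is positive on `(0,b)`, and the scalar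
curvature expression `-2(n-1)ρ''/ρ + (n-1)(n-2)(1-ρ'²)/ρ²` is non-negative on `(0,b)`,
then `|ρ'| ≤ 1` on `[0,b]`. -/
theorem invariant_spectrum_rho_deriv_bound
    (n : ℕ) (hn : 2 ≤ n) (b : ℝ) (hb : 0 < b)
    (ρ ρ' ρ'' : ℝ → ℝ)
    (hρ1 : ∀ t ∈ Icc (0:ℝ) b, HasDerivWithinAt ρ (ρ' t) (Icc 0 b) t)
    (hρ2 : ∀ t ∈ Icc (0:ℝ) b, HasDerivWithinAt ρ' (ρ'' t) (Icc 0 b) t)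
    (hρ2c : ContinuousOn ρ'' (Icc 0 b))
    (h00 : ρ 0 = 0) (hbb : ρ b = 0) (h0' : ρ' 0 = 1) (hb' : ρ' b = -1)
    (hpos : ∀ t ∈ Ioo (0:ℝ) b, 0 < ρ t)
    (hscal : ∀ t ∈ Ioo (0:ℝ) b,
      0 ≤ -2 * ((n:ℝ) - 1) * ρ'' t / ρ t
          + ((n:ℝ) - 1) * ((n:ℝ) - 2) * (1 - (ρ' t) ^ 2) / (ρ t) ^ 2) :
    ∀ t ∈ Icc (0:ℝ) b, |ρ' t| ≤ 1 :=
  invariant_spectrum_rho_deriv_bound_general n hn b ρ ρ' ρ'' hρ2 h0' hb' hpos hscal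
end

section
/- Let n ≥ 2 be an integer, b > 0, and let ρ : [0,b] → ℝ be C¹ with ρ(0) = ρ(b) = 0, ρ'(0) = 1, ρ'(b) = -1, ρ > 0 on (0,b), and ∫₀ᵇ ρ^{n-1} = 1. Let s(t) = ∫₀ᵗ ρ(τ)^{n-1} dτ with inverse t(s), and let Φ(s) = ρ(t(s)). Then Φ(0)ⁿ = Φ(1)ⁿ = 0, the one-sided derivative of Φⁿ at 0 (i.e. the limit as s → 0⁺ of Φ(s)ⁿ/s) equals n, and the one-sided derivative of Φⁿ at 1 (i.e. the limit as s → 1⁻ of Φ(s)ⁿ/(s-1)) equals -n. -/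
/-!
Write `S t = ∫₀ᵗ ρ^{n-1}`, so that `Φ(s)ⁿ / s = ρ(t)ⁿ / S(t)` for `t = T(s)`. Both `ρⁿ` and `S`
vanish at `t = 0`, with derivatives `n ρ^{n-1} ρ'` and `ρ^{n-1}`, so by L'Hôpital's rule the
quotient tends to `n ρ'(0) = n`; at the other end `S - 1` vanishes at `t = b` and the quotient
tends to `n ρ'(b) = -n`. Since `ρ > 0` inside, `S` is strictly increasing, so its right inverse
`T` sends `s → 0⁺` to `t → 0⁺` and `s → 1⁻` to `t → b⁻`.
-/

open Set MeasureTheory Filter Topology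

theorem hasDerivWithinAt_integral_Icc {f : ℝ → ℝ} {a b e t : ℝ} (hf : ContinuousOn f (Icc a b))
    (he : e ∈ Icc a b) (ht : t ∈ Icc a b) :
    HasDerivWithinAt (fun u => ∫ τ in e..u, f τ) (f t) (Icc a b) t :=
  have : Fact (t ∈ Icc a b) := ⟨ht⟩
  intervalIntegral.integral_hasDerivWithinAt_right
    (hf.mono (uIcc_subset_Icc he ht)).intervalIntegrable
    (hf.stronglyMeasurableAtFilter_nhdsWithin measurableSet_Icc t) (hf t ht)

theorem strictMonoOn_integral_of_pos {f : ℝ → ℝ} {a b : ℝ} (hf : ContinuousOn f (Icc a b))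
    (hpos : ∀ t ∈ Ioo a b, 0 < f t) : StrictMonoOn (fun t => ∫ τ in a..t, f τ) (Icc a b) := by
  intro t₁ h₁ t₂ h₂ h12
  have hint : ∀ {x y}, x ∈ Icc a b → y ∈ Icc a b → IntervalIntegrable f volume x y :=
    fun hx hy => (hf.mono (uIcc_subset_Icc hx hy)).intervalIntegrable
  show ∫ τ in a..t₁, f τ < ∫ τ in a..t₂, f τ
  rw [← intervalIntegral.integral_add_adjacent_intervals
    (hint (left_mem_Icc.2 (h₁.1.trans h₁.2)) h₁) (hint h₁ h₂)]
  exact lt_add_of_pos_right _ <| intervalIntegral.intervalIntegral_pos_of_pos_on (hint h₁ h₂)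
    (fun x hx => hpos x ⟨h₁.1.trans_lt hx.1, hx.2.trans_le h₂.2⟩) h12

section RightInverse

variable {S T : ℝ → ℝ} {a b : ℝ}

theorem tendsto_nhdsGT_of_rightInvOn (hab : a < b) (hS : StrictMonoOn S (Icc a b))
    (hT : MapsTo T (Icc (S a) (S b)) (Icc a b)) (hST : RightInvOn T S (Icc (S a) (S b))) :
    Tendsto T (𝓝[>] (S a)) (𝓝[>] a) := by
  refine (nhdsGT_basis a).tendsto_right_iff.2 fun c hc => ?_
  have ht : min c b ∈ Icc a b := ⟨(lt_min hc hab).le, min_le_right _ _⟩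
  have ha := left_mem_Icc.2 hab.le
  filter_upwards [Ioo_mem_nhdsGT (hS ha ht (lt_min hc hab))] with y ⟨hy₁, hy₂⟩
  have hy' : y ∈ Icc (S a) (S b) :=
    ⟨hy₁.le, hy₂.le.trans (hS.monotoneOn ht (right_mem_Icc.2 hab.le) (min_le_right _ _))⟩
  have hSTy : S (T y) = y := hST hy'
  refine ⟨(hS.lt_iff_lt ha (hT hy')).1 (by rwa [hSTy]), ?_⟩
  exact ((hS.lt_iff_lt (hT hy') ht).1 (by rwa [hSTy])).trans_le (min_le_left _ _)

theorem tendsto_nhdsLT_of_rightInvOn (hab : a < b) (hS : StrictMonoOn S (Icc a b))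
    (hT : MapsTo T (Icc (S a) (S b)) (Icc a b)) (hST : RightInvOn T S (Icc (S a) (S b))) :
    Tendsto T (𝓝[<] (S b)) (𝓝[<] b) := by
  refine (nhdsLT_basis b).tendsto_right_iff.2 fun c hc => ?_
  have ht : max c a ∈ Icc a b := ⟨le_max_right _ _, (max_lt hc hab).le⟩
  have hb := right_mem_Icc.2 hab.le
  filter_upwards [Ioo_mem_nhdsLT (hS ht hb (max_lt hc hab))] with y ⟨hy₁, hy₂⟩
  have hy' : y ∈ Icc (S a) (S b) :=
    ⟨(hS.monotoneOn (left_mem_Icc.2 hab.le) ht (le_max_right _ _)).trans hy₁.le, hy₂.le⟩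
  have hSTy : S (T y) = y := hST hy'
  refine ⟨(le_max_left _ _).trans_lt ((hS.lt_iff_lt ht (hT hy')).1 (by rwa [hSTy])), ?_⟩
  exact (hS.lt_iff_lt (hT hy') hb).1 (by rwa [hSTy])

end RightInverse

section LHopital

variable {ρ ρ' G : ℝ → ℝ} {a b : ℝ} {n : ℕ}
  (hρ : ∀ t ∈ Icc a b, HasDerivWithinAt ρ (ρ' t) (Icc a b) t)
  (hG : ∀ t ∈ Icc a b, HasDerivWithinAt G (ρ t ^ (n - 1)) (Icc a b) t)
include hρ hG

theorem tendsto_pow_div_of_hasDerivWithinAt_pow_pred {e : ℝ} (hn : n ≠ 0) (he : e ∈ Icc a b)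
    (hρ' : ContinuousWithinAt ρ' (Icc a b) e) (hρe : ρ e = 0) (hGe : G e = 0)
    (hne : ∀ᶠ t in 𝓝[Icc a b \ {e}] e, ρ t ≠ 0) :
    Tendsto (fun t => ρ t ^ n / G t) (𝓝[Icc a b \ {e}] e) (𝓝 (n * ρ' e)) := by
  have hle : 𝓝[Icc a b \ {e}] e ≤ 𝓝[Icc a b] e := nhdsWithin_mono _ sdiff_subset
  refine HasDerivWithinAt.lhopital_zero_nhdsWithin_convex (convex_Icc a b)
    (eventually_nhdsWithin_of_forall fun t ht => ((hρ t ht.1).pow n).mono sdiff_subset)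
    (eventually_nhdsWithin_of_forall fun t ht => (hG t ht.1).mono sdiff_subset)
    (hne.mono fun t ht => pow_ne_zero _ ht) ?_ ?_ ?_
  · simpa [hρe, hn] using ((hρ e he).continuousWithinAt.tendsto.pow n).mono_left hle
  · simpa [hGe] using (hG e he).continuousWithinAt.tendsto.mono_left hle
  · refine ((tendsto_const_nhds.mul hρ'.tendsto).mono_left hle).congr' ?_
    filter_upwards [hne] with t ht
    field_simp

theorem tendsto_pow_div_nhdsGT_of_hasDerivWithinAt_pow_pred (hn : n ≠ 0) (hab : a < b)
    (hρ' : ContinuousWithinAt ρ' (Icc a b) a) (hρa : ρ a = 0) (hGa : G a = 0)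
    (hne : ∀ t ∈ Ioo a b, ρ t ≠ 0) :
    Tendsto (fun t => ρ t ^ n / G t) (𝓝[>] a) (𝓝 (n * ρ' a)) := by
  have hGT : 𝓝[Icc a b \ {a}] a = 𝓝[>] a := by
    rw [Icc_sdiff_left, nhdsWithin_Ioc_eq_nhdsGT hab]
  have hne' : ∀ᶠ t in 𝓝[>] a, ρ t ≠ 0 := by filter_upwards [Ioo_mem_nhdsGT hab] using hne
  rw [← hGT] at hne' ⊢
  exact tendsto_pow_div_of_hasDerivWithinAt_pow_pred hρ hG hn (left_mem_Icc.2 hab.le) hρ' hρa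
    hGa hne'

theorem tendsto_pow_div_nhdsLT_of_hasDerivWithinAt_pow_pred (hn : n ≠ 0) (hab : a < b)
    (hρ' : ContinuousWithinAt ρ' (Icc a b) b) (hρb : ρ b = 0) (hGb : G b = 0)
    (hne : ∀ t ∈ Ioo a b, ρ t ≠ 0) :
    Tendsto (fun t => ρ t ^ n / G t) (𝓝[<] b) (𝓝 (n * ρ' b)) := by
  have hLT : 𝓝[Icc a b \ {b}] b = 𝓝[<] b := by
    rw [Icc_sdiff_right, nhdsWithin_Ico_eq_nhdsLT hab]
  have hne' : ∀ᶠ t in 𝓝[<] b, ρ t ≠ 0 := by filter_upwards [Ioo_mem_nhdsLT hab] using hne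
  rw [← hLT] at hne' ⊢
  exact tendsto_pow_div_of_hasDerivWithinAt_pow_pred hρ hG hn (right_mem_Icc.2 hab.le) hρ' hρb
    hGb hne'

end LHopital

theorem Phi_pow_n_boundary_general
    (n : ℕ) (hn : 2 ≤ n) (b : ℝ) (hb : 0 < b) (ρ ρ' : ℝ → ℝ)
    (hρ1 : ∀ t ∈ Icc (0:ℝ) b, HasDerivWithinAt ρ (ρ' t) (Icc 0 b) t)
    (hρ'c : ContinuousOn ρ' (Icc 0 b))
    (h00 : ρ 0 = 0) (hbb : ρ b = 0) (h0' : ρ' 0 = 1) (hb' : ρ' b = -1)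
    (hpos : ∀ t ∈ Ioo (0:ℝ) b, 0 < ρ t)
    (hvol : ∫ τ in (0:ℝ)..b, ρ τ ^ (n - 1) = 1)
    (S T : ℝ → ℝ)
    (hS : ∀ t, S t = ∫ τ in (0:ℝ)..t, ρ τ ^ (n - 1))
    (hTmem : ∀ s ∈ Icc (0:ℝ) 1, T s ∈ Icc 0 b)
    (hST : ∀ s ∈ Icc (0:ℝ) 1, S (T s) = s) :
    (ρ (T 0)) ^ n = 0 ∧ (ρ (T 1)) ^ n = 0 ∧
    Tendsto (fun s => (ρ (T s)) ^ n / s) (nhdsWithin 0 (Ioi 0)) (nhds (n:ℝ)) ∧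
    Tendsto (fun s => (ρ (T s)) ^ n / (s - 1)) (nhdsWithin 1 (Iio 1)) (nhds (-(n:ℝ))) := by
  have hS_eq : S = fun t => ∫ τ in (0:ℝ)..t, ρ τ ^ (n - 1) := funext hS
  have hn0 : n ≠ 0 := by omega
  have h0 := left_mem_Icc.2 hb.le
  have hb1 := right_mem_Icc.2 hb.le
  have hρc : ContinuousOn ρ (Icc 0 b) := fun t ht => (hρ1 t ht).continuousWithinAt
  have hne : ∀ t ∈ Ioo 0 b, ρ t ≠ 0 := fun t ht => (hpos t ht).ne'
  have hS0 : S 0 = 0 := by simp [hS]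
  have hSb : S b = 1 := by rw [hS, hvol]
  have hSmono : StrictMonoOn S (Icc 0 b) :=
    hS_eq ▸ strictMonoOn_integral_of_pos (hρc.pow _) fun t ht => pow_pos (hpos t ht) _
  have hSd : ∀ t ∈ Icc 0 b, HasDerivWithinAt S (ρ t ^ (n - 1)) (Icc 0 b) t :=
    fun t ht => hS_eq ▸ hasDerivWithinAt_integral_Icc (hρc.pow _) h0 ht
  have hT : MapsTo T (Icc (S 0) (S b)) (Icc 0 b) := by rwa [hS0, hSb]
  have hST' : RightInvOn T S (Icc (S 0) (S b)) := by rwa [hS0, hSb]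
  have hT0 : Tendsto T (𝓝[>] 0) (𝓝[>] 0) := by
    simpa [hS0] using tendsto_nhdsGT_of_rightInvOn hb hSmono hT hST'
  have hTb : Tendsto T (𝓝[<] 1) (𝓝[<] b) := by
    simpa [hSb] using tendsto_nhdsLT_of_rightInvOn hb hSmono hT hST'
  have hL0 : Tendsto (fun t => ρ t ^ n / S t) (𝓝[>] 0) (𝓝 n) := by
    simpa [h0'] using tendsto_pow_div_nhdsGT_of_hasDerivWithinAt_pow_pred hρ1 hSd hn0 hb
      (hρ'c 0 h0) h00 hS0 hne
  have hLb : Tendsto (fun t => ρ t ^ n / (S t - 1)) (𝓝[<] b) (𝓝 (-n)) := by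
    simpa [hb'] using tendsto_pow_div_nhdsLT_of_hasDerivWithinAt_pow_pred hρ1
      (fun t ht => (hSd t ht).sub_const 1) hn0 hb (hρ'c b hb1) hbb (by rw [hSb, sub_self]) hne
  refine ⟨?_, ?_, ?_, ?_⟩
  · rw [hSmono.injOn (hTmem 0 (by simp)) h0 (by rw [hST 0 (by simp), hS0]), h00, zero_pow hn0]
  · rw [hSmono.injOn (hTmem 1 (by simp)) hb1 (by rw [hST 1 (by simp), hSb]), hbb, zero_pow hn0]
  · refine (hL0.comp hT0).congr' ?_
    filter_upwards [Ioo_mem_nhdsGT one_pos] with s hs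
    simp [hST s (Ioo_subset_Icc_self hs)]
  · refine (hLb.comp hTb).congr' ?_
    filter_upwards [Ioo_mem_nhdsLT one_pos] with s hs
    simp [hST s (Ioo_subset_Icc_self hs)]

/-- With `Φ(s) = ρ(t(s))` as above and boundary conditions
`ρ(0) = ρ(b) = 0`, `ρ'(0) = 1`, `ρ'(b) = -1`, one has `Φ(0)ⁿ = Φ(1)ⁿ = 0`, the
one-sided derivative of `Φⁿ` at `0` equals `n`, and the one-sided derivative of
`Φⁿ` at `1` equals `-n`. -/
theorem Phi_pow_n_boundary
    (n : ℕ) (hn : 2 ≤ n) (b : ℝ) (hb : 0 < b) (ρ ρ' : ℝ → ℝ)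
    (hρ1 : ∀ t ∈ Icc (0:ℝ) b, HasDerivWithinAt ρ (ρ' t) (Icc 0 b) t)
    (hρ'c : ContinuousOn ρ' (Icc 0 b))
    (h00 : ρ 0 = 0) (hbb : ρ b = 0) (h0' : ρ' 0 = 1) (hb' : ρ' b = -1)
    (hpos : ∀ t ∈ Ioo (0:ℝ) b, 0 < ρ t)
    (hvol : ∫ τ in (0:ℝ)..b, ρ τ ^ (n - 1) = 1)
    (S T : ℝ → ℝ)
    (hS : ∀ t, S t = ∫ τ in (0:ℝ)..t, ρ τ ^ (n - 1))
    (hTmem : ∀ s ∈ Icc (0:ℝ) 1, T s ∈ Icc 0 b)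
    (hTS : ∀ t ∈ Icc (0:ℝ) b, T (S t) = t)
    (hST : ∀ s ∈ Icc (0:ℝ) 1, S (T s) = s) :
    (ρ (T 0)) ^ n = 0 ∧ (ρ (T 1)) ^ n = 0 ∧
    Tendsto (fun s => (ρ (T s)) ^ n / s) (nhdsWithin 0 (Ioi 0)) (nhds (n:ℝ)) ∧
    Tendsto (fun s => (ρ (T s)) ^ n / (s - 1)) (nhdsWithin 1 (Iio 1)) (nhds (-(n:ℝ))) :=
  Phi_pow_n_boundary_general n hn b hb ρ ρ' hρ1 hρ'c h00 hbb h0' hb' hpos hvol S T hS hTmem hST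
end

section
/- Let n ≥ 2 be an integer, b > 0, and let ρ : [0,b] → ℝ be a C² function with ρ(0) = ρ(b) = 0, ρ'(0) = 1, ρ'(b) = -1, ρ > 0 on (0,b), ∫₀ᵇ ρ^{n-1} = 1, and suppose the scalar curvature expression -2(n-1)·ρ''(t)/ρ(t) + (n-1)(n-2)·(1 - ρ'(t)²)/ρ(t)² is non-negative on (0,b). Define s(t) = ∫₀ᵗ ρ(τ)^{n-1} dτ, let t(s) be its inverse, and set Φ(s) = ρ(t(s)). Then Φ(s) ≤ Φ_max(s) for all s ∈ [0,1], where Φ_max(s) = (n·s)^{1/n} if 0 ≤ s ≤ 1/2 and Φ_max(s) = (n·(1-s))^{1/n} if 1/2 ≤ s ≤ 1. -/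
open Set MeasureTheory

/-!
Where `|ρ'| ≥ 1` the term `(n-1)(n-2)(1-ρ'²)/ρ²` is non-positive, so non-negative scalar
curvature forces `ρ'' ≤ 0` there. Starting from `ρ'(0) = 1` and ending at `ρ'(b) = -1`, the
derivative `ρ'` therefore never leaves `[-1, 1]`. Hence `|(ρⁿ)'| = n ρ^{n-1} |ρ'| ≤ n ρ^{n-1} = n s'`,
so `ρⁿ` grows from `ρ(0) = 0` by at most `n s` and falls to `ρ(b) = 0` by at most `n (1 - s)`;
taking `n`-th roots gives `Φ ≤ Φ_max`.
-/

theorem image_le_of_deriv_nonpos_above {f f' : ℝ → ℝ} {a b c : ℝ}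
    (hf : ContinuousOn f (Icc a b)) (hf' : ∀ x ∈ Ioo a b, HasDerivAt f (f' x) x)
    (ha : f a ≤ c) (hdecr : ∀ x ∈ Ioo a b, c < f x → f' x ≤ 0) :
    ∀ x ∈ Icc a b, f x ≤ c := by
  intro x hx
  by_contra! hcx
  set A := Icc a x ∩ f ⁻¹' Iic c
  have hAbdd : BddAbove A := bddAbove_Icc.mono inter_subset_left
  have hdA : sSup A ∈ A :=
    ((hf.mono (Icc_subset_Icc_right hx.2)).preimage_isClosed_of_isClosed isClosed_Icc
      isClosed_Iic).csSup_mem ⟨a, left_mem_Icc.2 hx.1, ha⟩ hAbdd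
  -- `d` is the last point before `x` with `f d ≤ c`; on `(d, x]` `f` exceeds `c`, so cannot increase.
  set d := sSup A
  have hfd : f d ≤ c := hdA.2
  have hdx : d < x := hdA.1.2.lt_of_ne fun h => hcx.not_ge (h ▸ hfd)
  have habove : ∀ y ∈ Ioc d x, c < f y := fun y hy => by
    by_contra! hyc
    exact hy.1.not_ge (le_csSup hAbdd ⟨⟨hdA.1.1.trans hy.1.le, hy.2⟩, hyc⟩)
  obtain ⟨ξ, hξ, hslope⟩ := exists_hasDerivAt_eq_slope f f' hdx
    (hf.mono (Icc_subset_Icc hdA.1.1 hx.2))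
    (fun y hy => hf' y ⟨hdA.1.1.trans_lt hy.1, hy.2.trans_le hx.2⟩)
  have hξneg : f' ξ ≤ 0 :=
    hdecr ξ ⟨hdA.1.1.trans_lt hξ.1, hξ.2.trans_le hx.2⟩ (habove ξ (Ioo_subset_Ioc_self hξ))
  rw [hslope, div_le_iff₀ (sub_pos.2 hdx), zero_mul] at hξneg
  linarith

theorem le_image_of_deriv_nonpos_below {f f' : ℝ → ℝ} {a b c : ℝ}
    (hf : ContinuousOn f (Icc a b)) (hf' : ∀ x ∈ Ioo a b, HasDerivAt f (f' x) x)
    (hb : c ≤ f b) (hdecr : ∀ x ∈ Ioo a b, f x < c → f' x ≤ 0) :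
    ∀ x ∈ Icc a b, c ≤ f x := by
  have key := image_le_of_deriv_nonpos_above (f := fun y => -f (-y)) (f' := fun y => f' (-y))
    (a := -b) (b := -a) (c := -c) ?_ ?_ (by simpa using hb) ?_
  · intro x hx
    simpa using key (-x) ⟨neg_le_neg hx.2, neg_le_neg hx.1⟩
  · exact (hf.comp continuousOn_neg fun u hu => ⟨le_neg.2 hu.2, neg_le.1 hu.1⟩).neg
  · intro y hy
    exact ((hf' (-y) ⟨lt_neg.1 hy.2, neg_lt.1 hy.1⟩).comp y (hasDerivAt_neg y)).neg.congr_deriv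
      (by simp)
  · intro y hy hy'
    exact hdecr (-y) ⟨lt_neg.1 hy.2, neg_lt.1 hy.1⟩ (by linarith)

theorem second_deriv_nonpos_of_scal_nonneg {n r r' r'' : ℝ} (hn : 2 ≤ n) (hr : 0 < r)
    (hscal : 0 ≤ -2 * (n - 1) * r'' / r + (n - 1) * (n - 2) * (1 - r' ^ 2) / r ^ 2)
    (hr' : 1 ≤ r' ^ 2) : r'' ≤ 0 := by
  rw [div_add_div _ _ hr.ne' (by positivity), le_div_iff₀ (by positivity), zero_mul] at hscal
  have hcurv : 0 ≤ r * ((n - 1) * (n - 2) * (r' ^ 2 - 1)) :=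
    mul_nonneg hr.le (mul_nonneg (by nlinarith) (by linarith))
  have hweight : 0 < (n - 1) * r ^ 2 := mul_pos (by linarith) (by positivity)
  by_contra! h
  nlinarith [mul_pos hweight h]

theorem abs_deriv_le_one_of_scal_nonneg {n a b : ℝ} (hn : 2 ≤ n) {ρ ρ' ρ'' : ℝ → ℝ}
    (hρ' : ContinuousOn ρ' (Icc a b)) (hρ'' : ∀ t ∈ Ioo a b, HasDerivAt ρ' (ρ'' t) t)
    (ha' : ρ' a = 1) (hb' : ρ' b = -1) (hpos : ∀ t ∈ Ioo a b, 0 < ρ t)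
    (hscal : ∀ t ∈ Ioo a b,
      0 ≤ -2 * (n - 1) * ρ'' t / ρ t + (n - 1) * (n - 2) * (1 - ρ' t ^ 2) / ρ t ^ 2) :
    ∀ t ∈ Icc a b, |ρ' t| ≤ 1 := by
  have hconcave : ∀ t ∈ Ioo a b, 1 ≤ ρ' t ^ 2 → ρ'' t ≤ 0 := fun t ht =>
    second_deriv_nonpos_of_scal_nonneg hn (hpos t ht) (hscal t ht)
  intro t ht
  refine abs_le.2 ⟨?_, ?_⟩
  · exact le_image_of_deriv_nonpos_below hρ' hρ'' hb'.ge
      (fun x hx hlt => hconcave x hx (by nlinarith)) t ht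
  · exact image_le_of_deriv_nonpos_above hρ' hρ'' ha'.le
      (fun x hx hlt => hconcave x hx (by nlinarith)) t ht

theorem hasDerivAt_integral_of_continuousOn {g : ℝ → ℝ} {a b x : ℝ}
    (hg : ContinuousOn g (Icc a b)) (hx : x ∈ Ioo a b) :
    HasDerivAt (fun t => ∫ τ in a..t, g τ) (g x) x :=
  intervalIntegral.integral_hasDerivAt_right
    ((hg.mono (Icc_subset_Icc_right hx.2.le)).intervalIntegrable_of_Icc hx.1.le)
    ((hg.mono Ioo_subset_Icc_self).stronglyMeasurableAtFilter isOpen_Ioo x hx)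
    (hg.continuousAt (Icc_mem_nhds hx.1 hx.2))

theorem abs_sub_le_sub_of_abs_deriv_le {f g f' g' : ℝ → ℝ} {a b : ℝ}
    (hf : ContinuousOn f (Icc a b)) (hg : ContinuousOn g (Icc a b))
    (hf' : ∀ x ∈ Ioo a b, HasDerivAt f (f' x) x) (hg' : ∀ x ∈ Ioo a b, HasDerivAt g (g' x) x)
    (hle : ∀ x ∈ Ioo a b, |f' x| ≤ g' x) {u v : ℝ} (hu : u ∈ Icc a b) (hv : v ∈ Icc a b)
    (huv : u ≤ v) : |f v - f u| ≤ g v - g u := by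
  have hmono : ∀ ε : ℝ, |ε| = 1 → MonotoneOn (fun x => g x - ε * f x) (Icc a b) := by
    intro ε hε
    refine monotoneOn_of_hasDerivWithinAt_nonneg (convex_Icc a b) (hg.sub (hf.const_smul ε))
      (f' := fun x => g' x - ε * f' x) (fun x hx => ?_) (fun x hx => ?_) <;>
      rw [interior_Icc] at hx
    · exact ((hg' x hx).sub ((hf' x hx).const_mul ε)).hasDerivWithinAt
    · have : ε * f' x ≤ |f' x| := by simpa [abs_mul, hε] using le_abs_self (ε * f' x)
      linarith [hle x hx]
  have h₁ := hmono 1 (by simp) hu hv huv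
  have h₂ := hmono (-1) (by simp) hu hv huv
  simp only [one_mul, neg_one_mul] at h₁ h₂
  exact abs_sub_le_iff.2 ⟨by linarith, by linarith⟩

theorem abs_pow_sub_pow_le_primitive_sub {ρ ρ' : ℝ → ℝ} {a b : ℝ} (n : ℕ)
    (hρ : ContinuousOn ρ (Icc a b)) (hρ' : ∀ x ∈ Ioo a b, HasDerivAt ρ (ρ' x) x)
    (hnn : ∀ x ∈ Ioo a b, 0 ≤ ρ x) (hle : ∀ x ∈ Ioo a b, |ρ' x| ≤ 1)
    ⦃u v : ℝ⦄ (hu : u ∈ Icc a b) (hv : v ∈ Icc a b) (huv : u ≤ v) :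
    |ρ v ^ n - ρ u ^ n| ≤ n * ((∫ τ in a..v, ρ τ ^ (n - 1)) - ∫ τ in a..u, ρ τ ^ (n - 1)) := by
  have hg : ContinuousOn (fun τ => ρ τ ^ (n - 1)) (Icc a b) := hρ.pow _
  have hprim : ContinuousOn (fun t => ∫ τ in a..t, ρ τ ^ (n - 1)) (Icc a b) := by
    rw [← uIcc_of_le (hu.1.trans hu.2)] at hg ⊢
    exact intervalIntegral.continuousOn_primitive_interval hg.integrableOn_Icc
  rw [mul_sub]
  refine abs_sub_le_sub_of_abs_deriv_le (hρ.pow n) (continuousOn_const.mul hprim)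
    (fun x hx => (hρ' x hx).pow n)
    (fun x hx => (hasDerivAt_integral_of_continuousOn hg hx).const_mul (n : ℝ))
    (fun x hx => ?_) hu hv huv
  have hpow : 0 ≤ (n : ℝ) * ρ x ^ (n - 1) := by have := hnn x hx; positivity
  rw [abs_mul, abs_of_nonneg hpow]
  exact mul_le_of_le_one_right hpow (hle x hx)

theorem le_rpow_one_div_of_pow_le {x y : ℝ} {n : ℕ} (hn : n ≠ 0) (hy : 0 ≤ y) (h : x ^ n ≤ y) :
    x ≤ y ^ ((1 : ℝ) / n) := by
  rcases lt_or_ge x 0 with hx | hx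
  · exact hx.le.trans (Real.rpow_nonneg hy _)
  · rw [one_div, Real.le_rpow_inv_iff_of_pos hx hy (by positivity), Real.rpow_natCast]
    exact h

theorem Phi_le_Phimax_of_nonneg_scal_general
    (n : ℕ) (hn : 2 ≤ n) (b : ℝ) (ρ ρ' ρ'' : ℝ → ℝ)
    (hρ1 : ∀ t ∈ Icc (0:ℝ) b, HasDerivWithinAt ρ (ρ' t) (Icc 0 b) t)
    (hρ2 : ∀ t ∈ Icc (0:ℝ) b, HasDerivWithinAt ρ' (ρ'' t) (Icc 0 b) t)
    (h00 : ρ 0 = 0) (hbb : ρ b = 0) (h0' : ρ' 0 = 1) (hb' : ρ' b = -1)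
    (hpos : ∀ t ∈ Ioo (0:ℝ) b, 0 < ρ t)
    (hvol : ∫ τ in (0:ℝ)..b, ρ τ ^ (n - 1) = 1)
    (hscal : ∀ t ∈ Ioo (0:ℝ) b,
      0 ≤ -2 * ((n:ℝ) - 1) * ρ'' t / ρ t
          + ((n:ℝ) - 1) * ((n:ℝ) - 2) * (1 - (ρ' t) ^ 2) / (ρ t) ^ 2)
    (S T : ℝ → ℝ)
    (hS : ∀ t, S t = ∫ τ in (0:ℝ)..t, ρ τ ^ (n - 1))
    (hTmem : ∀ s ∈ Icc (0:ℝ) 1, T s ∈ Icc 0 b)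
    (hST : ∀ s ∈ Icc (0:ℝ) 1, S (T s) = s) :
    ∀ s ∈ Icc (0:ℝ) 1,
      ρ (T s) ≤ if s ≤ 1/2 then ((n:ℝ) * s) ^ ((1:ℝ)/n)
                else ((n:ℝ) * (1 - s)) ^ ((1:ℝ)/n) := by
  have hderiv {f f' : ℝ → ℝ} (hf : ∀ t ∈ Icc (0:ℝ) b, HasDerivWithinAt f (f' t) (Icc 0 b) t) :
      ∀ t ∈ Ioo (0:ℝ) b, HasDerivAt f (f' t) t := fun t ht =>
    (hf t (Ioo_subset_Icc_self ht)).hasDerivAt (Icc_mem_nhds ht.1 ht.2)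
  have hslope : ∀ t ∈ Icc (0:ℝ) b, |ρ' t| ≤ 1 :=
    abs_deriv_le_one_of_scal_nonneg (by exact_mod_cast hn)
      (fun t ht => (hρ2 t ht).continuousWithinAt) (hderiv hρ2) h0' hb' hpos hscal
  have hgrowth := abs_pow_sub_pow_le_primitive_sub n
    (fun t ht => (hρ1 t ht).continuousWithinAt) (hderiv hρ1) (fun t ht => (hpos t ht).le)
    (fun t ht => hslope t (Ioo_subset_Icc_self ht))
  simp only [← hS] at hgrowth
  intro s hs
  have hT := hTmem s hs
  have hn0 : n ≠ 0 := by omega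
  have hS0 : S 0 = 0 := by simp [hS]
  have hSb : S b = 1 := by rw [hS, hvol]
  split_ifs
  · refine le_rpow_one_div_of_pow_le hn0 (mul_nonneg n.cast_nonneg hs.1)
      ((le_abs_self _).trans ?_)
    simpa [h00, hS0, hST s hs, zero_pow hn0] using
      hgrowth (left_mem_Icc.2 (hT.1.trans hT.2)) hT hT.1
  · refine le_rpow_one_div_of_pow_le hn0 (mul_nonneg n.cast_nonneg (sub_nonneg.2 hs.2))
      ((le_abs_self _).trans ?_)
    simpa [hbb, hSb, hST s hs, zero_pow hn0] using
      hgrowth hT (right_mem_Icc.2 (hT.1.trans hT.2)) hT.2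

/-- For a C² profile `ρ` of a unit-volume rotationally symmetric metric
on the n-sphere with non-negative scalar curvature, the profile `Φ(s) = ρ(t(s))` in the
coordinate `s(t) = ∫₀ᵗ ρ^{n-1}` satisfies `Φ(s) ≤ Φ_max(s)` on `[0,1]`, where
`Φ_max(s) = (ns)^{1/n}` for `s ≤ 1/2` and `Φ_max(s) = (n(1-s))^{1/n}` for `s ≥ 1/2`. -/
theorem Phi_le_Phimax_of_nonneg_scal
    (n : ℕ) (hn : 2 ≤ n) (b : ℝ) (hb : 0 < b) (ρ ρ' ρ'' : ℝ → ℝ)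
    (hρ1 : ∀ t ∈ Icc (0:ℝ) b, HasDerivWithinAt ρ (ρ' t) (Icc 0 b) t)
    (hρ2 : ∀ t ∈ Icc (0:ℝ) b, HasDerivWithinAt ρ' (ρ'' t) (Icc 0 b) t)
    (hρ2c : ContinuousOn ρ'' (Icc 0 b))
    (h00 : ρ 0 = 0) (hbb : ρ b = 0) (h0' : ρ' 0 = 1) (hb' : ρ' b = -1)
    (hpos : ∀ t ∈ Ioo (0:ℝ) b, 0 < ρ t)
    (hvol : ∫ τ in (0:ℝ)..b, ρ τ ^ (n - 1) = 1)
    (hscal : ∀ t ∈ Ioo (0:ℝ) b,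
      0 ≤ -2 * ((n:ℝ) - 1) * ρ'' t / ρ t
          + ((n:ℝ) - 1) * ((n:ℝ) - 2) * (1 - (ρ' t) ^ 2) / (ρ t) ^ 2)
    (S T : ℝ → ℝ)
    (hS : ∀ t, S t = ∫ τ in (0:ℝ)..t, ρ τ ^ (n - 1))
    (hTmem : ∀ s ∈ Icc (0:ℝ) 1, T s ∈ Icc 0 b)
    (hTS : ∀ t ∈ Icc (0:ℝ) b, T (S t) = t)
    (hST : ∀ s ∈ Icc (0:ℝ) 1, S (T s) = s) :
    ∀ s ∈ Icc (0:ℝ) 1,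
      ρ (T s) ≤ if s ≤ 1/2 then ((n:ℝ) * s) ^ ((1:ℝ)/n)
                else ((n:ℝ) * (1 - s)) ^ ((1:ℝ)/n) :=
  Phi_le_Phimax_of_nonneg_scal_general n hn b ρ ρ' ρ'' hρ1 hρ2 h00 hbb h0' hb' hpos hvol hscal S T
    hS hTmem hST
end

section
/- For all integers n ≥ 2 and k ≥ 1, there exists a constant D_k > 0 (depending only on n and k) with the following property. Let b > 0 and let ρ : [0,b] → ℝ be a C² function with ρ(0) = ρ(b) = 0, ρ'(0) = 1, ρ'(b) = -1, ρ > 0 on (0,b), ∫₀ᵇ ρ^{n-1} = 1, and with the scalar curvature expression -2(n-1)·ρ''/ρ + (n-1)(n-2)·(1-ρ'²)/ρ² non-negative on (0,b). Let s(t) = ∫₀ᵗ ρ^{n-1} dτ with inverse t(s) and set Φ(s) = ρ(t(s)). Then for every nonzero polynomial φ of degree at most k, ∫₀¹ Φ(s)^{2n-2}·(φ'(s))² ds ≤ D_k·∫₀¹ φ(s)² ds. -/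
open Set MeasureTheory Polynomial

/-!
Non-negative scalar curvature forces `ρ'' ≤ 0` wherever `|ρ'| ≥ 1`, so starting from `ρ'(0) = 1`
the slope of `ρ` never exceeds one. Hence `ρ τ ≥ ρ t - (t - τ)` for `τ ≤ t`, and integrating gives
`ρ(t)ⁿ ≤ n ∫₀ᵗ ρ^{n-1} = n s ≤ n`, so `Φ ≤ 2` and the weight `Φ^{2n-2}` is at most `2^{2n-2}`.
What remains is the comparison of `∫ (φ')²` with `∫ φ²` on the finite-dimensional space of
polynomials of degree `≤ k`: both are continuous, quadratically homogeneous and the latter is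
positive away from `0`, so their ratio is bounded on the unit sphere of coefficient vectors.
-/

theorem exists_le_mul_of_homogeneous {E : Type*} [NormedAddCommGroup E] [NormedSpace ℝ E]
    [ProperSpace E] {F G : E → ℝ} (hF : Continuous F) (hG : Continuous G)
    (hFh : ∀ (c : ℝ) v, F (c • v) = c ^ 2 * F v) (hGh : ∀ (c : ℝ) v, G (c • v) = c ^ 2 * G v)
    (hG_pos : ∀ v ≠ 0, 0 < G v) : ∃ C, 0 < C ∧ ∀ v, F v ≤ C * G v := by
  have hG_ne : ∀ v ∈ Metric.sphere (0 : E) 1, G v ≠ 0 := fun v hv =>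
    (hG_pos v (ne_zero_of_mem_unit_sphere ⟨v, hv⟩)).ne'
  obtain ⟨C, hC⟩ := (isCompact_sphere (0 : E) 1).exists_bound_of_continuousOn
    (hF.continuousOn.div hG.continuousOn hG_ne)
  refine ⟨max C 1, by positivity, fun v => ?_⟩
  rcases eq_or_ne v 0 with rfl | hv
  · have hF0 : F 0 = 0 := by simpa using hFh 0 0
    have hG0 : G 0 = 0 := by simpa using hGh 0 0
    simp [hF0, hG0]
  set u := ‖v‖⁻¹ • v
  have hu : u ∈ Metric.sphere (0 : E) 1 := by simp [u, norm_smul, hv]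
  have hvu : v = ‖v‖ • u := by simp [u, hv]
  have hFu : F u ≤ max C 1 * G u := by
    have hGu := hG_pos u (ne_zero_of_mem_unit_sphere ⟨u, hu⟩)
    have := (le_abs_self _).trans (hC u hu)
    rw [Pi.div_apply, div_le_iff₀ hGu] at this
    nlinarith [le_max_left C 1]
  rw [hvu, hFh, hGh]
  nlinarith [sq_nonneg ‖v‖]

theorem nonneg_of_pos_on_Ioo {f : ℝ → ℝ} {a b : ℝ} (ha : f a = 0) (hb : f b = 0)
    (hpos : ∀ x ∈ Ioo a b, 0 < f x) : ∀ x ∈ Icc a b, 0 ≤ f x := by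
  intro x hx
  rcases eq_endpoints_or_mem_Ioo_of_mem_Icc hx with rfl | rfl | hx
  exacts [ha.ge, hb.ge, (hpos x hx).le]

theorem intervalIntegral.integral_mono_on_of_nonneg {f g : ℝ → ℝ} {a b : ℝ} {μ : Measure ℝ}
    (hab : a ≤ b) (hg : IntervalIntegrable g μ a b) (hf : ∀ x ∈ Icc a b, 0 ≤ f x)
    (hfg : ∀ x ∈ Icc a b, f x ≤ g x) : ∫ x in a..b, f x ∂μ ≤ ∫ x in a..b, g x ∂μ := by
  rw [intervalIntegral.integral_of_le hab, intervalIntegral.integral_of_le hab]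
  refine integral_mono_of_nonneg ?_ hg.1 ?_ <;>
    filter_upwards [ae_restrict_mem measurableSet_Ioc] with x hx
  exacts [hf x (Ioc_subset_Icc_self hx), hfg x (Ioc_subset_Icc_self hx)]

theorem image_le_of_hasDerivAt_nonpos_above {f f' : ℝ → ℝ} {a b c : ℝ} (hf : ContinuousOn f (Icc a b))
    (hf' : ∀ x ∈ Ioo a b, HasDerivAt f (f' x) x) (ha : f a ≤ c)
    (hf'_nonpos : ∀ x ∈ Ioo a b, c < f x → f' x ≤ 0) : ∀ x ∈ Icc a b, f x ≤ c := by
  intro t ht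
  by_contra! hct
  set A := Icc a t ∩ f ⁻¹' Iic c
  have hA : IsClosed A := (hf.mono (Icc_subset_Icc_right ht.2)).preimage_isClosed_of_isClosed
    isClosed_Icc isClosed_Iic
  have haA : a ∈ A := ⟨left_mem_Icc.2 ht.1, ha⟩
  have hA_bdd : BddAbove A := ⟨t, fun x hx => hx.1.2⟩
  obtain ⟨⟨ha₀, ht₀⟩, hft₀⟩ : sSup A ∈ A := hA.csSup_mem ⟨a, haA⟩ hA_bdd
  set t₀ := sSup A
  have hgt : ∀ x ∈ Ioo t₀ t, c < f x := fun x hx => by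
    by_contra! hxc
    exact hx.1.not_ge (le_csSup hA_bdd ⟨⟨ha₀.trans hx.1.le, hx.2.le⟩, hxc⟩)
  have hsub : Ioo t₀ t ⊆ Ioo a b := Ioo_subset_Ioo ha₀ ht.2
  have hanti : AntitoneOn f (Icc t₀ t) := by
    refine antitoneOn_of_hasDerivWithinAt_nonpos (convex_Icc _ _)
      (hf.mono (Icc_subset_Icc ha₀ ht.2)) (f' := f') ?_ ?_ <;> rw [interior_Icc]
    · exact fun x hx => (hf' x (hsub hx)).hasDerivWithinAt
    · exact fun x hx => hf'_nonpos x (hsub hx) (hgt x hx)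
  have := hanti (left_mem_Icc.2 ht₀) (right_mem_Icc.2 ht₀) ht₀
  exact (hct.trans_le this).not_ge hft₀

theorem pow_succ_le_mul_integral_pow {f : ℝ → ℝ} {a t : ℝ} (m : ℕ) (hat : a ≤ t)
    (hf : ContinuousOn f (Icc a t)) (hf_nonneg : ∀ x ∈ Icc a t, 0 ≤ f x) (hfa : f a = 0)
    (hanti : AntitoneOn (fun x => f x - x) (Icc a t)) :
    f t ^ (m + 1) ≤ (m + 1) * ∫ x in a..t, f x ^ m := by
  have hle : ∀ x ∈ Icc a t, f t - t ≤ f x - x := fun x hx =>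
    hanti hx (right_mem_Icc.2 hat) hx.2
  set c := t - f t
  have hac : a ≤ c := by linarith [hle a (left_mem_Icc.2 hat)]
  have hct : c ≤ t := by linarith [hf_nonneg t (right_mem_Icc.2 hat)]
  have hfi : IntervalIntegrable (fun x => f x ^ m) volume a t :=
    (hf.pow m).intervalIntegrable_of_Icc hat
  have hfi_ac : IntervalIntegrable (fun x => f x ^ m) volume a c :=
    hfi.mono_set (by rw [uIcc_of_le hac, uIcc_of_le hat]; exact Icc_subset_Icc_right (by linarith))
  have hfi_ct : IntervalIntegrable (fun x => f x ^ m) volume c t :=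
    hfi.mono_set (by rw [uIcc_of_le hct, uIcc_of_le hat]; exact Icc_subset_Icc_left hac)
  -- `f` has slope at most one, so `x - c ≤ f x` on `[c, t]`
  calc f t ^ (m + 1) = (m + 1) * ∫ x in c..t, (x - c) ^ m := by
        rw [intervalIntegral.integral_comp_sub_right (fun x => x ^ m), integral_pow]
        simp only [c, sub_self, sub_sub_cancel]
        field_simp
        simp
    _ ≤ (m + 1) * ∫ x in c..t, f x ^ m := by
        gcongr
        refine intervalIntegral.integral_mono_on hct
          (Continuous.intervalIntegrable (by fun_prop) _ _) hfi_ct fun x hx => ?_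
        have := hle x ⟨hac.trans hx.1, hx.2⟩
        exact pow_le_pow_left₀ (sub_nonneg.2 hx.1) (by linarith) m
    _ ≤ (m + 1) * ∫ x in a..t, f x ^ m := by
        gcongr
        rw [← intervalIntegral.integral_add_adjacent_intervals hfi_ac hfi_ct]
        refine le_add_of_nonneg_left (intervalIntegral.integral_nonneg hac fun x hx => ?_)
        exact pow_nonneg (hf_nonneg x ⟨hx.1, hx.2.trans hct⟩) m

namespace Polynomial

theorem integral_sq_eval_pos {p : ℝ[X]} (hp : p ≠ 0) {a b : ℝ} (hab : a < b) :
    0 < ∫ x in a..b, p.eval x ^ 2 := by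
  have hint : IntervalIntegrable (fun x => p.eval x ^ 2) volume a b :=
    ((p.continuous).pow 2).intervalIntegrable a b
  rw [intervalIntegral.integral_pos_iff_support_of_nonneg_ae
    (Filter.Eventually.of_forall fun x => sq_nonneg _) hint]
  refine ⟨hab, ?_⟩
  have hsub : Ioc a b \ {x | p.IsRoot x} ⊆ Function.support (fun x => p.eval x ^ 2) ∩ Ioc a b :=
    fun x hx => ⟨pow_ne_zero 2 hx.2, hx.1⟩
  refine lt_of_lt_of_le ?_ (measure_mono hsub)
  rw [measure_sdiff_null ((finite_setOfPred_isRoot hp).measure_zero volume)]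
  simpa using hab

theorem continuous_eval_linearMap {ι : Type*} [Fintype ι] [DecidableEq ι]
    (M : (ι → ℝ) →ₗ[ℝ] ℝ[X]) : Continuous fun q : (ι → ℝ) × ℝ => (M q.1).eval q.2 := by
  have hM : (fun q : (ι → ℝ) × ℝ => (M q.1).eval q.2)
      = fun q => ∑ i, q.1 i * (M (Pi.single i 1)).eval q.2 := by
    funext q
    rw [M.pi_apply_eq_sum_univ q.1, eval_finsetSum]
    refine Finset.sum_congr rfl fun i _ => ?_
    rw [eval_smul, smul_eq_mul]
    congr 3
    ext j
    by_cases h : i = j <;> simp [h]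
  rw [hM]
  fun_prop

theorem integral_sq_eval_smul (c : ℝ) (p : ℝ[X]) (a b : ℝ) :
    ∫ x in a..b, (c • p).eval x ^ 2 = c ^ 2 * ∫ x in a..b, p.eval x ^ 2 := by
  simp only [eval_smul, smul_eq_mul, mul_pow, intervalIntegral.integral_const_mul]

theorem exists_integral_sq_eval_derivative_le (k : ℕ) {a b : ℝ} (hab : a < b) :
    ∃ C, 0 < C ∧ ∀ φ : ℝ[X], φ.natDegree ≤ k →
      ∫ x in a..b, φ.derivative.eval x ^ 2 ≤ C * ∫ x in a..b, φ.eval x ^ 2 := by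
  set L : (Fin (k + 1) → ℝ) →ₗ[ℝ] ℝ[X] :=
    (degreeLT ℝ (k + 1)).subtype ∘ₗ (degreeLTEquiv ℝ (k + 1)).symm.toLinearMap
  have hL : Function.Injective L :=
    Subtype.val_injective.comp (degreeLTEquiv ℝ (k + 1)).symm.injective
  have hcont : ∀ M : (Fin (k + 1) → ℝ) →ₗ[ℝ] ℝ[X],
      Continuous fun v => ∫ x in a..b, (M v).eval x ^ 2 := fun M =>
    intervalIntegral.continuous_parametric_intervalIntegral_of_continuous'
      ((continuous_eval_linearMap M).pow 2) a b
  obtain ⟨C, hC, hFG⟩ := exists_le_mul_of_homogeneous (hcont (derivative ∘ₗ L)) (hcont L)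
    (fun c v => by simp only [map_smul, integral_sq_eval_smul])
    (fun c v => by simp only [map_smul, integral_sq_eval_smul])
    (fun v hv => integral_sq_eval_pos (by simpa using hL.ne hv) hab)
  refine ⟨C, hC, fun φ hφ => ?_⟩
  have hmem : φ ∈ degreeLT ℝ (k + 1) := mem_degreeLT.2 <|
    (degree_le_of_natDegree_le hφ).trans_lt (WithBot.coe_lt_coe.2 k.lt_succ_self)
  have hφL : L (degreeLTEquiv ℝ (k + 1) ⟨φ, hmem⟩) = φ := by simp [L]
  simpa only [LinearMap.comp_apply, hφL] using hFG (degreeLTEquiv ℝ (k + 1) ⟨φ, hmem⟩)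

end Polynomial

/-- Scalar curvature of `dt² + ρ(t)² dS²_{n-1}` at a point where `ρ = r`, `ρ' = p`, `ρ'' = q`. -/
noncomputable def rotSymmScal (n : ℕ) (r p q : ℝ) : ℝ :=
  -2 * ((n : ℝ) - 1) * q / r + ((n : ℝ) - 1) * ((n : ℝ) - 2) * (1 - p ^ 2) / r ^ 2

theorem nonpos_of_rotSymmScal_nonneg {n : ℕ} (hn : 2 ≤ n) {r p q : ℝ} (hr : 0 < r)
    (hp : 1 ≤ p ^ 2) (hscal : 0 ≤ rotSymmScal n r p q) : q ≤ 0 := by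
  have hn' : (2 : ℝ) ≤ n := by exact_mod_cast hn
  unfold rotSymmScal at hscal
  have hscal' : 0 ≤ -2 * ((n : ℝ) - 1) * q * r + ((n : ℝ) - 1) * ((n : ℝ) - 2) * (1 - p ^ 2) := by
    have := mul_nonneg hscal (sq_nonneg r)
    field_simp at this
    linarith
  have hB : ((n : ℝ) - 1) * ((n : ℝ) - 2) * (1 - p ^ 2) ≤ 0 :=
    mul_nonpos_of_nonneg_of_nonpos (by nlinarith) (by linarith)
  by_contra! hq
  nlinarith [mul_pos (mul_pos (by linarith : (0 : ℝ) < n - 1) hr) hq]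

section Profile

variable {n : ℕ} {b : ℝ} {ρ ρ' ρ'' : ℝ → ℝ}

theorem deriv_le_one_of_rotSymmScal_nonneg (hn : 2 ≤ n)
    (hρ'' : ∀ t ∈ Icc 0 b, HasDerivWithinAt ρ' (ρ'' t) (Icc 0 b) t) (hρ'0 : ρ' 0 = 1)
    (hpos : ∀ t ∈ Ioo 0 b, 0 < ρ t)
    (hscal : ∀ t ∈ Ioo 0 b, 0 ≤ rotSymmScal n (ρ t) (ρ' t) (ρ'' t)) :
    ∀ t ∈ Icc 0 b, ρ' t ≤ 1 :=
  image_le_of_hasDerivAt_nonpos_above (fun t ht => (hρ'' t ht).continuousWithinAt)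
    (fun t ht => (hρ'' t (Ioo_subset_Icc_self ht)).hasDerivAt (Icc_mem_nhds ht.1 ht.2))
    hρ'0.le fun t ht h1 =>
      nonpos_of_rotSymmScal_nonneg hn (hpos t ht) (by nlinarith) (hscal t ht)

theorem pow_le_mul_integral_of_rotSymmScal_nonneg (hn : 2 ≤ n)
    (hρ' : ∀ t ∈ Icc 0 b, HasDerivWithinAt ρ (ρ' t) (Icc 0 b) t)
    (hρ'' : ∀ t ∈ Icc 0 b, HasDerivWithinAt ρ' (ρ'' t) (Icc 0 b) t)
    (hρ0 : ρ 0 = 0) (hρb : ρ b = 0) (hρ'0 : ρ' 0 = 1) (hpos : ∀ t ∈ Ioo 0 b, 0 < ρ t)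
    (hscal : ∀ t ∈ Ioo 0 b, 0 ≤ rotSymmScal n (ρ t) (ρ' t) (ρ'' t)) :
    ∀ t ∈ Icc 0 b, ρ t ^ n ≤ n * ∫ τ in 0..t, ρ τ ^ (n - 1) := by
  have hρ'_le := deriv_le_one_of_rotSymmScal_nonneg hn hρ'' hρ'0 hpos hscal
  have hcont : ContinuousOn ρ (Icc 0 b) := fun t ht => (hρ' t ht).continuousWithinAt
  have hanti : AntitoneOn (fun x => ρ x - x) (Icc 0 b) := by
    refine antitoneOn_of_hasDerivWithinAt_nonpos (convex_Icc 0 b)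
      (hcont.sub continuousOn_id) (f' := fun x => ρ' x - 1) ?_ ?_ <;> rw [interior_Icc]
    · exact fun x hx => (((hρ' x (Ioo_subset_Icc_self hx)).hasDerivAt
        (Icc_mem_nhds hx.1 hx.2)).sub (hasDerivAt_id x)).hasDerivWithinAt
    · exact fun x hx => sub_nonpos.2 (hρ'_le x (Ioo_subset_Icc_self hx))
  intro t ht
  have hsub : Icc 0 t ⊆ Icc 0 b := Icc_subset_Icc_right ht.2
  obtain ⟨m, rfl⟩ : ∃ m, n = m + 1 := ⟨n - 1, by omega⟩
  simpa using pow_succ_le_mul_integral_pow m ht.1 (hcont.mono hsub)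
    (fun x hx => nonneg_of_pos_on_Ioo hρ0 hρb hpos x (hsub hx)) hρ0 (hanti.mono hsub)

end Profile

theorem rayleigh_bound_of_nonneg_scal_general (n k : ℕ) (hn : 2 ≤ n) :
    ∃ D : ℝ, 0 < D ∧
      ∀ (b : ℝ), 0 < b → ∀ (ρ ρ' ρ'' S T : ℝ → ℝ),
        (∀ t ∈ Icc (0:ℝ) b, HasDerivWithinAt ρ (ρ' t) (Icc 0 b) t) →
        (∀ t ∈ Icc (0:ℝ) b, HasDerivWithinAt ρ' (ρ'' t) (Icc 0 b) t) →
        ContinuousOn ρ'' (Icc 0 b) →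
        ρ 0 = 0 → ρ b = 0 → ρ' 0 = 1 → ρ' b = -1 →
        (∀ t ∈ Ioo (0:ℝ) b, 0 < ρ t) →
        (∫ τ in (0:ℝ)..b, ρ τ ^ (n - 1)) = 1 →
        (∀ t ∈ Ioo (0:ℝ) b,
          0 ≤ -2 * ((n:ℝ) - 1) * ρ'' t / ρ t
              + ((n:ℝ) - 1) * ((n:ℝ) - 2) * (1 - (ρ' t) ^ 2) / (ρ t) ^ 2) →
        (∀ t, S t = ∫ τ in (0:ℝ)..t, ρ τ ^ (n - 1)) →
        (∀ s ∈ Icc (0:ℝ) 1, T s ∈ Icc 0 b) →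
        (∀ t ∈ Icc (0:ℝ) b, T (S t) = t) →
        (∀ s ∈ Icc (0:ℝ) 1, S (T s) = s) →
        ∀ φ : Polynomial ℝ, φ ≠ 0 → φ.natDegree ≤ k →
          (∫ s in (0:ℝ)..1,
              (ρ (T s)) ^ (2 * n - 2)
                * (Polynomial.eval s (Polynomial.derivative φ)) ^ 2)
            ≤ D * ∫ s in (0:ℝ)..1, (Polynomial.eval s φ) ^ 2 := by
  obtain ⟨C, hC, hpoly⟩ := Polynomial.exists_integral_sq_eval_derivative_le k zero_lt_one
  refine ⟨2 ^ (2 * n - 2) * C, by positivity, ?_⟩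
  intro b _ ρ ρ' ρ'' S T hρ' hρ'' _ hρ0 hρb hρ'0 _ hpos _ hscal hS hT _ hST φ _ hφ
  have hΦ : ∀ s ∈ Icc (0:ℝ) 1, 0 ≤ ρ (T s) ∧ ρ (T s) ≤ 2 := fun s hs => by
    have hρT := pow_le_mul_integral_of_rotSymmScal_nonneg hn hρ' hρ'' hρ0 hρb hρ'0 hpos hscal
      (T s) (hT s hs)
    rw [← hS, hST s hs] at hρT
    have hn2 : (n : ℝ) < 2 ^ n := by exact_mod_cast n.lt_two_pow_self
    refine ⟨nonneg_of_pos_on_Ioo hρ0 hρb hpos _ (hT s hs), ?_⟩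
    refine (lt_of_pow_lt_pow_left₀ n zero_le_two ?_).le
    nlinarith [hs.2]
  calc (∫ s in (0:ℝ)..1, ρ (T s) ^ (2 * n - 2) * φ.derivative.eval s ^ 2)
      ≤ ∫ s in (0:ℝ)..1, 2 ^ (2 * n - 2) * φ.derivative.eval s ^ 2 :=
        intervalIntegral.integral_mono_on_of_nonneg zero_le_one
          (Continuous.intervalIntegrable (by fun_prop) _ _)
          (fun s hs => mul_nonneg (pow_nonneg (hΦ s hs).1 _) (sq_nonneg _))
          (fun s hs => by gcongr; exacts [(hΦ s hs).1, (hΦ s hs).2])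
    _ = 2 ^ (2 * n - 2) * ∫ s in (0:ℝ)..1, φ.derivative.eval s ^ 2 :=
        intervalIntegral.integral_const_mul _ _
    _ ≤ 2 ^ (2 * n - 2) * (C * ∫ s in (0:ℝ)..1, φ.eval s ^ 2) := by gcongr; exact hpoly φ hφ
    _ = 2 ^ (2 * n - 2) * C * ∫ s in (0:ℝ)..1, φ.eval s ^ 2 := by ring

/-- For integers `n ≥ 2`, `k ≥ 1` there is a constant `D_k > 0`
(depending only on `n` and `k`) such that for every unit-volume rotationally symmetric
profile `ρ` on `[0,b]` with non-negative scalar curvature, writing `Φ(s) = ρ(t(s))` in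
the coordinate `s(t) = ∫₀ᵗ ρ^{n-1}`, every nonzero polynomial `φ` of degree at most `k`
satisfies `∫₀¹ Φ^{2n-2} (φ')² ds ≤ D_k ∫₀¹ φ² ds`. -/
theorem rayleigh_bound_of_nonneg_scal (n k : ℕ) (hn : 2 ≤ n) (hk : 1 ≤ k) :
    ∃ D : ℝ, 0 < D ∧
      ∀ (b : ℝ), 0 < b → ∀ (ρ ρ' ρ'' S T : ℝ → ℝ),
        (∀ t ∈ Icc (0:ℝ) b, HasDerivWithinAt ρ (ρ' t) (Icc 0 b) t) →
        (∀ t ∈ Icc (0:ℝ) b, HasDerivWithinAt ρ' (ρ'' t) (Icc 0 b) t) →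
        ContinuousOn ρ'' (Icc 0 b) →
        ρ 0 = 0 → ρ b = 0 → ρ' 0 = 1 → ρ' b = -1 →
        (∀ t ∈ Ioo (0:ℝ) b, 0 < ρ t) →
        (∫ τ in (0:ℝ)..b, ρ τ ^ (n - 1)) = 1 →
        (∀ t ∈ Ioo (0:ℝ) b,
          0 ≤ -2 * ((n:ℝ) - 1) * ρ'' t / ρ t
              + ((n:ℝ) - 1) * ((n:ℝ) - 2) * (1 - (ρ' t) ^ 2) / (ρ t) ^ 2) →
        (∀ t, S t = ∫ τ in (0:ℝ)..t, ρ τ ^ (n - 1)) →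
        (∀ s ∈ Icc (0:ℝ) 1, T s ∈ Icc 0 b) →
        (∀ t ∈ Icc (0:ℝ) b, T (S t) = t) →
        (∀ s ∈ Icc (0:ℝ) 1, S (T s) = s) →
        ∀ φ : Polynomial ℝ, φ ≠ 0 → φ.natDegree ≤ k →
          (∫ s in (0:ℝ)..1,
              (ρ (T s)) ^ (2 * n - 2)
                * (Polynomial.eval s (Polynomial.derivative φ)) ^ 2)
            ≤ D * ∫ s in (0:ℝ)..1, (Polynomial.eval s φ) ^ 2 :=
  rayleigh_bound_of_nonneg_scal_general n k hn
end
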